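/- For an irrational x₀ ∈ (0,1) with continued fraction digits aₙ and approximation coefficients θₙ, for all n ≥ 1: aₙ₊₁ = ⌊(1 + √(1 − 4θₙ₋₁θₙ))/(2θₙ)⌋. -/

import Mathlib

noncomputable section

open Real

/-- The Gauss map `T x = 1/x - ⌊1/x⌋`. -/
def gauss (x : ℝ) : ℝ := 1 / x - ⌊1 / x⌋

/-- The future of `x₀` at time `n`: `xₙ = Tⁿ x₀`. -/
def fut (x₀ : ℝ) (n : ℕ) : ℝ := gauss^[n] x₀

/-- The `n`-th partial quotient (digit) of `x₀` (meaningful for `n ≥ 1`):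
`aₙ = ⌊1/xₙ₋₁⌋`. -/
def digit (x₀ : ℝ) (n : ℕ) : ℤ := ⌊1 / fut x₀ (n - 1)⌋

/-- Numerators of the continued fraction convergents of `x₀ ∈ (0,1)`. -/
def num (x₀ : ℝ) : ℕ → ℤ
  | 0 => 0
  | 1 => 1
  | (n + 2) => digit x₀ (n + 2) * num x₀ (n + 1) + num x₀ n

/-- Denominators of the continued fraction convergents of `x₀ ∈ (0,1)`. -/
def den (x₀ : ℝ) : ℕ → ℤ
  | 0 => 1
  | 1 => digit x₀ 1
  | (n + 2) => digit x₀ (n + 2) * den x₀ (n + 1) + den x₀ n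

/-- The `n`-th approximation coefficient `θₙ = qₙ² |x₀ - pₙ/qₙ|`. -/
def theta (x₀ : ℝ) (n : ℕ) : ℝ :=
  (den x₀ n : ℝ) ^ 2 * |x₀ - (num x₀ n : ℝ) / (den x₀ n : ℝ)|

/-- Finite continued fraction `[b₁,...,bₖ] = 1/(b₁ + 1/(⋯ + 1/bₖ))`, with `[∅] = 0`. -/
def fcf : List ℝ → ℝ
  | [] => 0
  | (b :: bs) => 1 / (b + fcf bs)

/-- The past of `x₀` at time `n ≥ 1`: `yₙ = -aₙ - [aₙ₋₁, aₙ₋₂, ..., a₁]`. -/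
def past (x₀ : ℝ) (n : ℕ) : ℝ :=
  -(digit x₀ n : ℝ) -
    fcf (((List.range (n - 1)).map fun i => ((digit x₀ (n - 1 - i) : ℤ) : ℝ)))

/-- The domain `Ω = (0,1) × (-∞,-1)`. -/
def Omega : Set (ℝ × ℝ) := Set.Ioo (0 : ℝ) 1 ×ˢ Set.Iio (-1 : ℝ)

/-- The open triangle `Γ` with vertices `(0,0)`, `(1,0)`, `(0,1)`. -/
def Gam : Set (ℝ × ℝ) := {p | 0 < p.1 ∧ 0 < p.2 ∧ p.1 + p.2 < 1}

/-- The map `Ψ(x,y) = (1/(x-y), -xy/(x-y))`. -/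
def Psi (p : ℝ × ℝ) : ℝ × ℝ := (1 / (p.1 - p.2), -(p.1 * p.2) / (p.1 - p.2))

/-- The map `Φ(u,v) = ((1-√(1-4uv))/(2u), -(1+√(1-4uv))/(2u))`. -/
def Phi (p : ℝ × ℝ) : ℝ × ℝ :=
  ((1 - Real.sqrt (1 - 4 * p.1 * p.2)) / (2 * p.1),
   -((1 + Real.sqrt (1 - 4 * p.1 * p.2)) / (2 * p.1)))

/-- The natural extension map `𝒯(x,y) = (1/x - ⌊1/x⌋, 1/y - ⌊1/x⌋)`. -/
def natExt (p : ℝ × ℝ) : ℝ × ℝ := (1 / p.1 - ⌊1 / p.1⌋, 1 / p.2 - ⌊1 / p.1⌋)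

/-! With `xₙ₊₁ = Tⁿ⁺¹ x₀` and `Dₙ = qₙ₊₁ + qₙ xₙ₊₁`, the identity `x₀ = (pₙ₊₁ + pₙ xₙ₊₁)/Dₙ` and the
determinant identity give `θₙ = qₙ / Dₙ` and `θₙ₊₁ = qₙ₊₁ xₙ₊₁ / Dₙ`. Hence
`1 - 4θₙθₙ₊₁ = ((qₙ₊₁ - qₙ xₙ₊₁) / Dₙ)²`, and `(1 + √(1 - 4θₙθₙ₊₁)) / (2θₙ₊₁) = 1 / xₙ₊₁`,
whose floor is `aₙ₊₂` by definition of the Gauss map. -/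

lemma gauss_mem_Ioo {x : ℝ} (hirr : Irrational x) : gauss x ∈ Set.Ioo (0 : ℝ) 1 := by
  have hinv : Irrational (1 / x) := by simpa only [one_div] using hirr.inv
  exact ⟨Int.fract_pos.2 fun h => hinv.ne_int _ h, Int.fract_lt_one _⟩

lemma irrational_gauss {x : ℝ} (hirr : Irrational x) : Irrational (gauss x) := by
  have hinv : Irrational (1 / x) := by simpa only [one_div] using hirr.inv
  exact hinv.sub_intCast _

lemma fut_succ (x₀ : ℝ) (n : ℕ) : fut x₀ (n + 1) = 1 / fut x₀ n - digit x₀ (n + 1) := by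
  simp only [fut, Function.iterate_succ_apply', gauss, digit, Nat.add_sub_cancel]

lemma irrational_fut {x₀ : ℝ} (hirr : Irrational x₀) (n : ℕ) : Irrational (fut x₀ n) := by
  induction n with
  | zero => exact hirr
  | succ n ih => simpa only [fut, Function.iterate_succ_apply'] using irrational_gauss ih

lemma fut_mem_Ioo {x₀ : ℝ} (hx : x₀ ∈ Set.Ioo (0 : ℝ) 1) (hirr : Irrational x₀) :
    ∀ n, fut x₀ n ∈ Set.Ioo (0 : ℝ) 1
  | 0 => hx
  | n + 1 => by
    simpa only [fut, Function.iterate_succ_apply'] using gauss_mem_Ioo (irrational_fut hirr n)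

lemma one_le_digit {x₀ : ℝ} (hx : x₀ ∈ Set.Ioo (0 : ℝ) 1) (hirr : Irrational x₀) (n : ℕ) :
    1 ≤ digit x₀ n := by
  obtain ⟨hpos, hlt⟩ := fut_mem_Ioo hx hirr (n - 1)
  exact Int.le_floor.2 (by rw [Int.cast_one, le_div_iff₀ hpos]; linarith)

lemma one_le_den_and_den_le_den_succ {x₀ : ℝ} (hx : x₀ ∈ Set.Ioo (0 : ℝ) 1)
    (hirr : Irrational x₀) (n : ℕ) : 1 ≤ den x₀ n ∧ den x₀ n ≤ den x₀ (n + 1) := by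
  induction n with
  | zero => exact ⟨le_rfl, one_le_digit hx hirr 1⟩
  | succ n ih =>
    have hq : 1 ≤ den x₀ (n + 1) := ih.1.trans ih.2
    refine ⟨hq, ?_⟩
    show den x₀ (n + 1) ≤ digit x₀ (n + 2) * den x₀ (n + 1) + den x₀ n
    nlinarith [one_le_digit hx hirr (n + 2)]

lemma num_succ_mul_den_sub_num_mul_den_succ (x₀ : ℝ) (n : ℕ) :
    (num x₀ (n + 1) * den x₀ n - num x₀ n * den x₀ (n + 1) : ℝ) = (-1) ^ n := by
  induction n with
  | zero => simp [num, den]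
  | succ n ih =>
    show (↑(digit x₀ (n + 2) * num x₀ (n + 1) + num x₀ n) * den x₀ (n + 1) -
        num x₀ (n + 1) * ↑(digit x₀ (n + 2) * den x₀ (n + 1) + den x₀ n) : ℝ) = (-1) ^ (n + 1)
    push_cast
    linear_combination -ih

lemma mul_den_add_den_mul_fut {x₀ : ℝ} (hirr : Irrational x₀) (n : ℕ) :
    x₀ * (den x₀ (n + 1) + den x₀ n * fut x₀ (n + 1)) =
      num x₀ (n + 1) + num x₀ n * fut x₀ (n + 1) := by
  induction n with
  | zero =>
    have h := fut_succ x₀ 0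
    simp only [num, den, fut, Function.iterate_zero_apply] at h ⊢
    have hx₀ : x₀ ≠ 0 := hirr.ne_zero
    rw [h]; push_cast; field_simp; ring
  | succ n ih =>
    have hx : fut x₀ (n + 1) ≠ 0 := (irrational_fut hirr (n + 1)).ne_zero
    have hinv : fut x₀ (n + 1) * (digit x₀ (n + 2) + fut x₀ (n + 2)) = 1 := by
      rw [fut_succ x₀ (n + 1)]; field_simp; ring
    show x₀ * (↑(digit x₀ (n + 2) * den x₀ (n + 1) + den x₀ n) +
        den x₀ (n + 1) * fut x₀ (n + 2)) =
      ↑(digit x₀ (n + 2) * num x₀ (n + 1) + num x₀ n) + num x₀ (n + 1) * fut x₀ (n + 2)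
    push_cast
    linear_combination (digit x₀ (n + 2) + fut x₀ (n + 2)) * ih +
      (num x₀ n - x₀ * den x₀ n) * hinv

lemma theta_eq_abs_den_mul_abs (x₀ : ℝ) (n : ℕ) :
    theta x₀ n = |(den x₀ n : ℝ)| * |x₀ * den x₀ n - num x₀ n| := by
  rcases eq_or_ne (den x₀ n : ℝ) 0 with hq | hq
  · simp [theta, hq]
  · rw [theta, ← sq_abs, sq, mul_assoc, ← abs_mul (den x₀ n : ℝ), mul_sub, mul_div_cancel₀ _ hq,
      mul_comm (den x₀ n : ℝ)]

section Convergents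

variable {x₀ : ℝ} (hx : x₀ ∈ Set.Ioo (0 : ℝ) 1) (hirr : Irrational x₀) (n : ℕ)
include hx hirr

lemma den_add_den_mul_fut_pos : 0 < (den x₀ (n + 1) + den x₀ n * fut x₀ (n + 1) : ℝ) := by
  have hq : (1 : ℝ) ≤ den x₀ n := by exact_mod_cast (one_le_den_and_den_le_den_succ hx hirr n).1
  have hq' : (1 : ℝ) ≤ den x₀ (n + 1) := by
    exact_mod_cast (one_le_den_and_den_le_den_succ hx hirr (n + 1)).1
  nlinarith [(fut_mem_Ioo hx hirr (n + 1)).1]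

lemma mul_den_sub_num_eq : x₀ * den x₀ n - num x₀ n =
    (-1) ^ n / (den x₀ (n + 1) + den x₀ n * fut x₀ (n + 1)) := by
  rw [eq_div_iff (den_add_den_mul_fut_pos hx hirr n).ne']
  linear_combination den x₀ n * mul_den_add_den_mul_fut hirr n +
    num_succ_mul_den_sub_num_mul_den_succ x₀ n

lemma mul_den_succ_sub_num_succ_eq : x₀ * den x₀ (n + 1) - num x₀ (n + 1) =
    -(-1) ^ n * fut x₀ (n + 1) / (den x₀ (n + 1) + den x₀ n * fut x₀ (n + 1)) := by
  rw [eq_div_iff (den_add_den_mul_fut_pos hx hirr n).ne']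
  linear_combination den x₀ (n + 1) * mul_den_add_den_mul_fut hirr n -
    fut x₀ (n + 1) * num_succ_mul_den_sub_num_mul_den_succ x₀ n

lemma theta_eq_den_div :
    theta x₀ n = den x₀ n / (den x₀ (n + 1) + den x₀ n * fut x₀ (n + 1)) := by
  have hq : (0 : ℝ) ≤ den x₀ n := by
    exact_mod_cast zero_le_one.trans (one_le_den_and_den_le_den_succ hx hirr n).1
  rw [theta_eq_abs_den_mul_abs, mul_den_sub_num_eq hx hirr, abs_div, abs_pow, abs_neg, abs_one,
    one_pow, abs_of_pos (den_add_den_mul_fut_pos hx hirr n), abs_of_nonneg hq, mul_one_div]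

lemma theta_succ_eq_den_mul_fut_div : theta x₀ (n + 1) =
    den x₀ (n + 1) * fut x₀ (n + 1) / (den x₀ (n + 1) + den x₀ n * fut x₀ (n + 1)) := by
  have hq : (0 : ℝ) ≤ den x₀ (n + 1) := by
    exact_mod_cast zero_le_one.trans (one_le_den_and_den_le_den_succ hx hirr (n + 1)).1
  rw [theta_eq_abs_den_mul_abs, mul_den_succ_sub_num_succ_eq hx hirr, abs_div, abs_mul, abs_neg,
    abs_pow, abs_neg, abs_one, one_pow, one_mul, abs_of_pos (den_add_den_mul_fut_pos hx hirr n),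
    abs_of_pos (fut_mem_Ioo hx hirr (n + 1)).1, abs_of_nonneg hq, mul_div_assoc]

end Convergents

lemma one_add_sqrt_div_eq_inv {a b x : ℝ} (ha : 0 < a) (hb : 0 ≤ b) (hx : 0 < x)
    (hbx : b * x ≤ a) :
    (1 + √(1 - 4 * (b / (a + b * x)) * (a * x / (a + b * x)))) / (2 * (a * x / (a + b * x))) =
      1 / x := by
  have hD : 0 < a + b * x := by positivity
  have hsq : 1 - 4 * (b / (a + b * x)) * (a * x / (a + b * x)) =
      ((a - b * x) / (a + b * x)) ^ 2 := by
    field_simp; ring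
  rw [hsq, Real.sqrt_sq (div_nonneg (sub_nonneg.2 hbx) hD.le)]
  field_simp
  ring

theorem stmt14 (x₀ : ℝ) (hx : x₀ ∈ Set.Ioo (0:ℝ) 1) (hirr : Irrational x₀)
    (n : ℕ) (hn : 1 ≤ n) :
    digit x₀ (n + 1) =
      ⌊(1 + Real.sqrt (1 - 4 * theta x₀ (n - 1) * theta x₀ n)) / (2 * theta x₀ n)⌋ := by
  obtain ⟨m, rfl⟩ := Nat.exists_eq_add_of_le' hn
  obtain ⟨hq, hqq⟩ : (1 : ℝ) ≤ den x₀ m ∧ (den x₀ m : ℝ) ≤ den x₀ (m + 1) := by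
    exact_mod_cast one_le_den_and_den_le_den_succ hx hirr m
  obtain ⟨hxpos, hxlt⟩ := fut_mem_Ioo hx hirr (m + 1)
  rw [Nat.add_sub_cancel, theta_succ_eq_den_mul_fut_div hx hirr m, theta_eq_den_div hx hirr m,
    one_add_sqrt_div_eq_inv (by linarith) (by linarith) hxpos (by nlinarith)]
  rfl
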